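/- Let $M$ be an $R$-module such that the quotient $M/Q$ with $Q = (\cap_{P\in Spec(M)} P : M)M$ is faithful. Then the Zariski topology-graph $G(\tau_{Spec(M)})$ and the graph $AG(M)^*$ coincide: they have the same vertex sets and the same edges. -/

import Mathlib

open Submodule

section Defs
variable (R : Type*) [CommRing R] {M : Type*} [AddCommGroup M] [Module R M]

/-- `(N : M)`, the colon ideal of a submodule with the whole module. -/
def colonTop (N : Submodule R M) : Ideal R := N.colon ⊤

variable {R}

/-- A prime submodule. -/
def IsPrimeSubmodule (P : Submodule R M) : Prop :=
  P ≠ ⊤ ∧ ∀ (r : R) (m : M), r • m ∈ P → r ∈ colonTop R P ∨ m ∈ P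

/-- The prime spectrum of a module, as a set of submodules. -/
def specSet (R : Type*) [CommRing R] (M : Type*) [AddCommGroup M] [Module R M] :
    Set (Submodule R M) := {P | IsPrimeSubmodule P}

/-- `V(N)`. -/
def Vset (N : Submodule R M) : Set (Submodule R M) :=
  {P | IsPrimeSubmodule P ∧ colonTop R N ≤ colonTop R P}

/-- `V^*(N)`. -/
def VstarSet (N : Submodule R M) : Set (Submodule R M) :=
  {P | IsPrimeSubmodule P ∧ N ≤ P}

/-- The product `NK = (N:M)(K:M)M` of two submodules. -/
def prodSub (N K : Submodule R M) : Submodule R M :=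
  (colonTop R N * colonTop R K) • (⊤ : Submodule R M)

/-- The prime radical of a submodule. -/
def radicalSub (N : Submodule R M) : Submodule R M :=
  sInf {P | IsPrimeSubmodule P ∧ N ≤ P}

/-- Adjacency in the Zariski topology-graph `G(τ_T)`. -/
def ZAdj (T : Set (Submodule R M)) (N L : Submodule R M) : Prop :=
  N ≠ L ∧ N ≠ ⊤ ∧ L ≠ ⊤ ∧ Vset N ∪ Vset L = T ∧ Vset N ≠ T ∧ Vset L ≠ T

/-- Vertices of the Zariski topology-graph `G(τ_T)`. -/
def ZVertex (T : Set (Submodule R M)) (N : Submodule R M) : Prop :=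
  ∃ K, ZAdj T N K

/-- The Zariski topology-graph `G(τ_T)` as a simple graph on its vertex set. -/
def ZGraph (T : Set (Submodule R M)) : SimpleGraph {N : Submodule R M // ZVertex T N} where
  Adj a b := ZAdj T a.1 b.1
  symm := ⟨by
    rintro a b ⟨h1, h2, h3, h4, h5, h6⟩
    exact ⟨h1.symm, h3, h2, by rwa [Set.union_comm], h6, h5⟩⟩
  loopless := ⟨by rintro a ⟨h1, -⟩; exact h1 rfl⟩

end Defs
section Extra
variable {R : Type*} [CommRing R] {M : Type*} [AddCommGroup M] [Module R M]

/-- Prime submodule of a submodule `W`, internal version (i.e. a prime submodule of the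
module `W`). -/
def IsPrimeIn (W P : Submodule R M) : Prop :=
  P < W ∧ ∀ (r : R) (m : M), m ∈ W → r • m ∈ P → (∀ x ∈ W, r • x ∈ P) ∨ m ∈ P

/-- The prime radical of `N` computed inside the submodule `W`. -/
def radicalIn (W N : Submodule R M) : Submodule R M :=
  sInf {P | IsPrimeIn W P ∧ N ≤ P} ⊓ W

/-- Vertices of the graph `AG(M)^*`. -/
def AGstarVertex (N : Submodule R M) : Prop :=
  N ≠ ⊤ ∧ colonTop R N ≠ Module.annihilator R M ∧
    ∃ K, K ≠ ⊤ ∧ colonTop R K ≠ Module.annihilator R M ∧ prodSub N K = ⊥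

/-- Adjacency in the graph `AG(M)^*`. -/
def AGstarAdj (N L : Submodule R M) : Prop :=
  N ≠ L ∧ AGstarVertex N ∧ AGstarVertex L ∧ prodSub N L = ⊥

/-- The clique number of a graph, valued in `ℕ∞`. -/
noncomputable def cliqueNumE {V : Type*} (G : SimpleGraph V) : ℕ∞ :=
  ⨆ n ∈ {n : ℕ | ∃ s, G.IsNClique n s}, (n : ℕ∞)

end Extra
section Aux
variable {R : Type*} [CommRing R] {M : Type*} [AddCommGroup M] [Module R M]

lemma mem_colonTop {N : Submodule R M} {r : R} :
    r ∈ colonTop R N ↔ ∀ m : M, r • m ∈ N := by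
  simp [colonTop, Submodule.mem_colon]

lemma colonTop_isPrime {P : Submodule R M} (hP : IsPrimeSubmodule P) :
    (colonTop R P).IsPrime := by
  constructor
  · intro h
    apply hP.1
    rw [eq_top_iff]
    intro m _
    have h1 : (1 : R) ∈ colonTop R P := h ▸ Submodule.mem_top
    simpa using mem_colonTop.mp h1 m
  · intro a b hab
    by_cases hb : b ∈ colonTop R P
    · exact Or.inr hb
    · left
      rw [mem_colonTop] at hb
      push_neg at hb
      obtain ⟨m, hm⟩ := hb
      have h1 : a • (b • m) ∈ P := by
        rw [smul_smul]; exact mem_colonTop.mp hab m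
      rcases hP.2 a (b • m) h1 with h | h
      · exact h
      · exact absurd h hm

end Aux

/-- if `M/Q` is faithful (with `Q = (∩_{P∈Spec(M)}P : M)M`), then
`G(τ_{Spec(M)})` and `AG(M)^*` have the same vertices and the same edges. -/
theorem stmt8 {R : Type*} [CommRing R] {M : Type*} [AddCommGroup M] [Module R M]
    (Q : Submodule R M)
    (hQ : Q = colonTop R (sInf (specSet R M)) • (⊤ : Submodule R M))
    (hfaith : Module.annihilator R (M ⧸ Q) = ⊥) :
    (∀ N : Submodule R M, ZVertex (specSet R M) N ↔ AGstarVertex N) ∧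
      (∀ N L : Submodule R M, ZAdj (specSet R M) N L ↔ AGstarAdj N L) := by
  -- From faithfulness: the colon of the intersection of all primes is zero.
  have hI0 : colonTop R (sInf (specSet R M)) = ⊥ := by
    rw [eq_bot_iff]
    intro r hr
    have hmem : r ∈ Module.annihilator R (M ⧸ Q) := by
      rw [Module.mem_annihilator]
      intro x
      obtain ⟨m, rfl⟩ := Submodule.Quotient.mk_surjective Q x
      rw [← Submodule.Quotient.mk_smul, Submodule.Quotient.mk_eq_zero, hQ]
      exact Submodule.smul_mem_smul hr Submodule.mem_top
    rw [hfaith] at hmem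
    exact hmem
  -- Key consequence: anything in every (P : M) is zero.
  have h0 : ∀ r : R, (∀ P ∈ specSet R M, r ∈ colonTop R P) → r = 0 := by
    intro r hr
    have : r ∈ colonTop R (sInf (specSet R M)) := by
      rw [mem_colonTop]
      intro m
      rw [Submodule.mem_sInf]
      intro P hP
      exact mem_colonTop.mp (hr P hP) m
    rw [hI0] at this
    exact this
  -- The module is faithful.
  have hAnn : Module.annihilator R M = ⊥ := by
    rw [eq_bot_iff]
    intro r hr
    have := Module.mem_annihilator.mp hr
    exact h0 r (fun P _ => mem_colonTop.mpr fun m => (this m) ▸ P.zero_mem) ▸ Ideal.zero_mem ⊥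
  -- V(N) = Spec(M) iff (N : M) = 0.
  have hVeq : ∀ N : Submodule R M, Vset N = specSet R M ↔ colonTop R N = ⊥ := by
    intro N
    constructor
    · intro h
      rw [eq_bot_iff]
      intro r hr
      have : r = 0 := h0 r (fun P hP => ((h ▸ hP : P ∈ Vset N).2) hr)
      simpa [this] using Ideal.zero_mem (⊥ : Ideal R)
    · intro h
      apply Set.Subset.antisymm
      · rintro P ⟨hP, -⟩; exact hP
      · intro P hP
        exact ⟨hP, h ▸ bot_le⟩
  -- V(N) ∪ V(L) = Spec(M) iff (N:M)(L:M) = 0.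
  have hUnion : ∀ N L : Submodule R M,
      Vset N ∪ Vset L = specSet R M ↔ colonTop R N * colonTop R L = ⊥ := by
    intro N L
    constructor
    · intro h
      rw [eq_bot_iff]
      intro r hr
      have : r = 0 := by
        apply h0
        intro P hP
        rcases (h ▸ hP : P ∈ Vset N ∪ Vset L) with ⟨-, hle⟩ | ⟨-, hle⟩
        · exact hle (Ideal.mul_le_left hr)
        · exact hle (Ideal.mul_le_right hr)
      simpa [this] using Ideal.zero_mem (⊥ : Ideal R)
    · intro h
      apply Set.Subset.antisymm
      · rintro P (⟨hP, -⟩ | ⟨hP, -⟩) <;> exact hP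
      · intro P hP
        have hprime := colonTop_isPrime hP
        have : colonTop R N * colonTop R L ≤ colonTop R P := h ▸ bot_le
        rcases (Ideal.IsPrime.mul_le hprime).mp this with h' | h'
        · exact Or.inl ⟨hP, h'⟩
        · exact Or.inr ⟨hP, h'⟩
  -- prodSub N L = ⊥ iff (N:M)(L:M) = 0.
  have hProd : ∀ N L : Submodule R M,
      prodSub N L = ⊥ ↔ colonTop R N * colonTop R L = ⊥ := by
    intro N L
    constructor
    · intro h
      rw [eq_bot_iff]
      intro r hr
      have hr0 : ∀ m : M, r • m = 0 := by
        intro m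
        have : r • m ∈ prodSub N L := Submodule.smul_mem_smul hr Submodule.mem_top
        rw [h] at this
        simpa using this
      have : r ∈ Module.annihilator R M := Module.mem_annihilator.mpr hr0
      rwa [hAnn] at this
    · intro h
      rw [prodSub, h]
      exact Submodule.bot_smul _
  -- a nonzero colon ideal cannot square to zero
  have hSq : ∀ N : Submodule R M, colonTop R N * colonTop R N = ⊥ → colonTop R N = ⊥ := by
    intro N h
    rw [← hVeq]
    have := (hUnion N N).mpr h
    rwa [Set.union_self] at this
  constructor
  · intro N
    constructor
    · rintro ⟨K, hNK, hN, hK, hU, hVN, hVK⟩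
      refine ⟨hN, ?_, K, hK, ?_, (hProd N K).mpr ((hUnion N K).mp hU)⟩
      · rw [hAnn]; exact fun h => hVN ((hVeq N).mpr h)
      · rw [hAnn]; exact fun h => hVK ((hVeq K).mpr h)
    · rintro ⟨hN, hcN, K, hK, hcK, hPK⟩
      rw [hAnn] at hcN hcK
      have hprod := (hProd N K).mp hPK
      have hKN : N ≠ K := by
        rintro rfl
        exact hcN (hSq N hprod)
      exact ⟨K, hKN, hN, hK, (hUnion N K).mpr hprod,
        fun h => hcN ((hVeq N).mp h), fun h => hcK ((hVeq K).mp h)⟩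
  · intro N L
    constructor
    · rintro ⟨hNL, hN, hL, hU, hVN, hVL⟩
      have hprod := (hUnion N L).mp hU
      have pN : colonTop R N ≠ ⊥ := fun h => hVN ((hVeq N).mpr h)
      have pL : colonTop R L ≠ ⊥ := fun h => hVL ((hVeq L).mpr h)
      have hprod' : colonTop R L * colonTop R N = ⊥ := by rwa [mul_comm] at hprod
      exact ⟨hNL,
        ⟨hN, by rw [hAnn]; exact pN, L, hL, by rw [hAnn]; exact pL, (hProd N L).mpr hprod⟩,
        ⟨hL, by rw [hAnn]; exact pL, N, hN, by rw [hAnn]; exact pN, (hProd L N).mpr hprod'⟩,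
        (hProd N L).mpr hprod⟩
    · rintro ⟨hNL, ⟨hN, hcN, -⟩, ⟨hL, hcL, -⟩, hPK⟩
      rw [hAnn] at hcN hcL
      exact ⟨hNL, hN, hL, (hUnion N L).mpr ((hProd N L).mp hPK),
        fun h => hcN ((hVeq N).mp h), fun h => hcL ((hVeq L).mp h)⟩
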